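/- Let p_n(z) = 1 - (z + z² + ⋯ + zⁿ)/n. Then for every f ∈ H², ‖p_n f - f‖_{H²} → 0 as n → ∞. -/

import Mathlib

open Complex Metric Filter

noncomputable def meanSq (f : ℂ → ℂ) (r : ℝ) : ℝ :=
  (2 * Real.pi)⁻¹ * ∫ θ in (0:ℝ)..(2 * Real.pi), ‖f ((r : ℂ) * Complex.exp (θ * Complex.I))‖ ^ 2

def MemH2 (f : ℂ → ℂ) : Prop :=
  DifferentiableOn ℂ f (ball 0 1) ∧ BddAbove (meanSq f '' Set.Ioo 0 1)

noncomputable def h2Norm (f : ℂ → ℂ) : ℝ :=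
  Real.sqrt (sSup (meanSq f '' Set.Ioo 0 1))

/-- The polynomial `p_n(z) = 1 - (z + z² + ⋯ + zⁿ)/n`. -/
noncomputable def pPoly (n : ℕ) (z : ℂ) : ℂ :=
  1 - (∑ k ∈ Finset.range n, z ^ (k + 1)) / (n : ℂ)

/-!
Write `f = ∑ aₖ zᵏ`. By Parseval on the circle of radius `r`, `meanSq f r = ∑ |aₖ|² r²ᵏ`, so
`f ∈ H²` forces `a ∈ ℓ²`, and `‖g‖_{H²}` is at most the `ℓ²` norm of the Taylor coefficients
of `g`. The coefficients of `(p_n - 1) f` are the Cauchy product `q_n * a`, where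
`q_n = -(1/n) (0, 1, …, 1, 0, …)` has `‖q_n‖₁ = 1` and `‖q_n‖₂² = 1/n`. Young's inequality
`‖u * v‖₂ ≤ ‖u‖₁ ‖v‖₂` then bounds `‖q_n * t‖₂ ≤ ‖t‖₂` for an `ℓ²`-small tail `t` of `a`, and
`‖q_n * h‖₂ = ‖h * q_n‖₂ ≤ ‖h‖₁ / √n → 0` for the finitely supported head `h`.
-/

open MeasureTheory Finset
open scoped Real Topology NNReal

section Parseval

theorem integral_exp_int_mul_mul_I (m : ℤ) :
    ∫ θ in (0:ℝ)..2 * π, exp (m * θ * I) = if m = 0 then ((2 * π : ℝ) : ℂ) else 0 := by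
  split_ifs with hm
  · simp [hm]
  have hmI : (m : ℂ) * I ≠ 0 := by simp [hm, I_ne_zero]
  simp_rw [mul_comm _ I, ← mul_assoc, mul_comm I]
  rw [integral_exp_mul_complex hmI]
  have : exp (m * I * (2 * π)) = 1 := by
    rw [← exp_int_mul_two_pi_mul_I m]; ring_nf
  simp [this]

variable {c : ℕ → ℂ} {g : ℝ → ℂ}

theorem fourierCoeffOn_of_hasSum (hc : Summable (‖c ·‖))
    (hg : ∀ θ : ℝ, HasSum (fun k => c k * exp (θ * I) ^ k) (g θ)) (m : ℤ) :
    fourierCoeffOn Real.two_pi_pos g m = Function.extend (↑) c (0 : ℤ → ℂ) m := by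
  -- `fourierCoeffOn_eq_integral` integrates against `fourier` on `AddCircle (b - a)`.
  have hmode (k : ℕ) (θ : ℝ) :
      fourier (-m) (θ : AddCircle (2 * π - 0)) • (c k * exp (θ * I) ^ k)
        = c k * exp (((k : ℤ) - m : ℤ) * θ * I) := by
    rw [fourier_coe_apply, smul_eq_mul, ← exp_nat_mul, mul_left_comm, ← exp_add]
    congr 2
    push_cast
    field_simp
    ring
  have hsum : HasSum (fun k => c k * if (k : ℤ) = m then ((2 * π : ℝ) : ℂ) else 0)
      (∫ θ in (0:ℝ)..2 * π, fourier (-m) (θ : AddCircle (2 * π - 0)) • g θ) := by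
    simp_rw [← sub_eq_zero (a := ((_ : ℕ) : ℤ)), ← integral_exp_int_mul_mul_I,
      ← intervalIntegral.integral_const_mul, ← hmode]
    refine intervalIntegral.hasSum_integral_of_dominated_convergence (fun k _ => ‖c k‖)
      (fun k => by fun_prop) (fun k => ae_of_all _ fun θ _ => ?_) (ae_of_all _ fun _ _ => hc)
      intervalIntegrable_const (ae_of_all _ fun θ _ => (hg θ).const_smul _)
    rw [hmode]
    simp [norm_exp]
  rw [fourierCoeffOn_eq_integral, ← hsum.tsum_eq, sub_zero]
  by_cases hm : ∃ j : ℕ, (j : ℤ) = m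
  · obtain ⟨j, rfl⟩ := hm
    simp [Nat.cast_injective.extend_apply]
    field_simp
  · simp only [not_exists] at hm
    simp [hm]

theorem hasSum_sq_norm_of_hasSum (hc : Summable (‖c ·‖))
    (hg : ∀ θ : ℝ, HasSum (fun k => c k * exp (θ * I) ^ k) (g θ)) :
    HasSum (fun k => ‖c k‖ ^ 2) ((2 * π)⁻¹ * ∫ θ in (0:ℝ)..2 * π, ‖g θ‖ ^ 2) := by
  have hnorm (k : ℕ) (θ : ℝ) : ‖c k * exp (θ * I) ^ k‖ = ‖c k‖ := by
    simp [norm_exp_ofReal_mul_I]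
  have hcont : Continuous g := by
    rw [show g = fun θ : ℝ => ∑' k, c k * exp (θ * I) ^ k from
      funext fun θ => (hg θ).tsum_eq.symm]
    exact continuous_tsum (fun k => by fun_prop) hc fun k θ => (hnorm k θ).le
  have hL2 : MemLp g 2 (volume.restrict (Set.Ioc 0 (2 * π))) :=
    MemLp.of_bound hcont.aestronglyMeasurable (∑' k, ‖c k‖) <| ae_of_all _ fun θ =>
      (hg θ).norm_le_of_bounded hc.hasSum fun k => (hnorm k θ).le
  have := hasSum_sq_fourierCoeffOn Real.two_pi_pos hL2
  simp_rw [fourierCoeffOn_of_hasSum hc hg, sub_zero, smul_eq_mul,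
    Function.apply_extend (fun x : ℂ => ‖x‖ ^ 2)] at this
  rw [← hasSum_extend_zero (Nat.cast_injective (R := ℤ))]
  simpa [Function.comp_def, Pi.zero_def] using this

end Parseval

section CauchyProduct

variable {R : Type*}

def cauchyProduct [Semiring R] (u v : ℕ → R) (k : ℕ) : R :=
  ∑ p ∈ antidiagonal k, u p.1 * v p.2

theorem cauchyProduct_comm [CommSemiring R] (u v : ℕ → R) :
    cauchyProduct u v = cauchyProduct v u := by
  funext k
  rw [cauchyProduct, cauchyProduct, ← Nat.sum_antidiagonal_swap]
  simp [mul_comm]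

theorem cauchyProduct_add_right [Semiring R] (u v w : ℕ → R) :
    cauchyProduct u (v + w) = cauchyProduct u v + cauchyProduct u w := by
  funext k
  simp [cauchyProduct, mul_add, sum_add_distrib]

theorem cauchyProduct_mul_pow [CommSemiring R] (u v : ℕ → R) (z : R) (k : ℕ) :
    cauchyProduct u v k * z ^ k
      = ∑ p ∈ antidiagonal k, u p.1 * z ^ p.1 * (v p.2 * z ^ p.2) := by
  rw [cauchyProduct, sum_mul]
  refine sum_congr rfl fun p hp => ?_
  rw [← mem_antidiagonal.mp hp, pow_add]
  ring

theorem hasSum_cauchyProduct_of_nonneg {u v : ℕ → ℝ} (hu : Summable u) (hv : Summable v)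
    (hu₀ : ∀ i, 0 ≤ u i) (hv₀ : ∀ j, 0 ≤ v j) :
    HasSum (cauchyProduct u v) ((∑' i, u i) * ∑' j, v j) := by
  have huv := hu.mul_of_nonneg hv hu₀ hv₀
  rw [hu.tsum_mul_tsum_eq_tsum_sum_antidiagonal hv huv]
  exact (summable_sum_mul_antidiagonal_of_summable_mul huv).hasSum

section Young

variable [NormedRing R] {u v : ℕ → R}

theorem sq_norm_cauchyProduct_le (hu : Summable (‖u ·‖)) (v : ℕ → R) (k : ℕ) :
    ‖cauchyProduct u v k‖ ^ 2 ≤ (∑' i, ‖u i‖) * cauchyProduct (‖u ·‖) (‖v ·‖ ^ 2) k := by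
  have hdiag : ∑ p ∈ antidiagonal k, ‖u p.1‖ ≤ ∑' i, ‖u i‖ := by
    rw [Nat.sum_antidiagonal_eq_sum_range_succ (fun i _ => ‖u i‖)]
    exact hu.sum_le_tsum _ fun i _ => norm_nonneg _
  calc ‖cauchyProduct u v k‖ ^ 2 ≤ (∑ p ∈ antidiagonal k, ‖u p.1‖ * ‖v p.2‖) ^ 2 := by
        gcongr
        exact (norm_sum_le _ _).trans (sum_le_sum fun p _ => norm_mul_le _ _)
    _ ≤ (∑ p ∈ antidiagonal k, ‖u p.1‖) * cauchyProduct (‖u ·‖) (‖v ·‖ ^ 2) k :=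
        sum_sq_le_sum_mul_sum_of_sq_le_mul _ (fun _ _ => norm_nonneg _)
          (fun _ _ => by positivity) fun _ _ => le_of_eq (by ring)
    _ ≤ (∑' i, ‖u i‖) * cauchyProduct (‖u ·‖) (‖v ·‖ ^ 2) k := by
        gcongr
        exact sum_nonneg fun _ _ => by positivity

theorem summable_sq_norm_cauchyProduct (hu : Summable (‖u ·‖)) (hv : Summable (‖v ·‖ ^ 2)) :
    Summable (‖cauchyProduct u v ·‖ ^ 2) :=
  .of_nonneg_of_le (fun _ => by positivity) (sq_norm_cauchyProduct_le hu v)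
    ((hasSum_cauchyProduct_of_nonneg hu hv (fun _ => norm_nonneg _)
      fun _ => by positivity).summable.mul_left _)

theorem tsum_sq_norm_cauchyProduct_le (hu : Summable (‖u ·‖)) (hv : Summable (‖v ·‖ ^ 2)) :
    ∑' k, ‖cauchyProduct u v k‖ ^ 2 ≤ (∑' i, ‖u i‖) ^ 2 * ∑' j, ‖v j‖ ^ 2 := by
  have h := (hasSum_cauchyProduct_of_nonneg hu hv (fun _ => norm_nonneg _)
    fun _ => by positivity).mul_left (∑' i, ‖u i‖)
  rw [← mul_assoc, ← sq] at h
  exact hasSum_le (sq_norm_cauchyProduct_le hu v) (summable_sq_norm_cauchyProduct hu hv).hasSum h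

end Young

theorem tsum_sq_norm_add_le {E : Type*} [SeminormedAddCommGroup E] {x y : ℕ → E}
    (hx : Summable (‖x ·‖ ^ 2)) (hy : Summable (‖y ·‖ ^ 2)) :
    ∑' k, ‖x k + y k‖ ^ 2 ≤ 2 * ∑' k, ‖x k‖ ^ 2 + 2 * ∑' k, ‖y k‖ ^ 2 := by
  have hle (k : ℕ) : ‖x k + y k‖ ^ 2 ≤ 2 * ‖x k‖ ^ 2 + 2 * ‖y k‖ ^ 2 := by
    nlinarith [norm_add_le (x k) (y k), norm_nonneg (x k + y k), sq_nonneg (‖x k‖ - ‖y k‖)]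
  have hs := (hx.mul_left 2).add (hy.mul_left 2)
  rw [← tsum_mul_left, ← tsum_mul_left, ← (hx.mul_left 2).tsum_add (hy.mul_left 2)]
  exact (hs.of_nonneg_of_le (fun _ => by positivity) hle).tsum_le_tsum hle hs

theorem tendsto_tsum_sq_norm_cauchyProduct [NormedCommRing R] {q : ℕ → ℕ → R} {a : ℕ → R}
    {C : ℝ} (hq₁ : ∀ n, Summable (‖q n ·‖)) (hC : ∀ n, ∑' i, ‖q n i‖ ≤ C)
    (hq₂ : ∀ n, Summable (‖q n ·‖ ^ 2)) (hq : Tendsto (fun n => ∑' i, ‖q n i‖ ^ 2) atTop (𝓝 0))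
    (ha : Summable (‖a ·‖ ^ 2)) :
    Tendsto (fun n => ∑' k, ‖cauchyProduct (q n) a k‖ ^ 2) atTop (𝓝 0) := by
  refine tendsto_order.2 ⟨fun b hb => .of_forall fun n =>
    hb.trans_le (tsum_nonneg fun _ => by positivity), fun ε hε => ?_⟩
  obtain ⟨m, hm⟩ := ((tendsto_order.1 (tendsto_sum_nat_add (‖a ·‖ ^ 2))).2
    (ε / (4 * C ^ 2 + 1)) (by positivity)).exists
  set head : ℕ → R := fun i => if i < m then a i else 0
  set tail : ℕ → R := fun i => if i < m then 0 else a i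
  have hsplit : a = head + tail := by funext i; by_cases h : i < m <;> simp [head, tail, h]
  have hhead : Summable (‖head ·‖) := summable_of_ne_finset_zero (s := range m) fun i hi => by
    simp [head, mem_range.not.mp hi]
  have htail : HasSum (‖tail ·‖ ^ 2) (∑' i, ‖a (i + m)‖ ^ 2) := by
    rw [← hasSum_nat_add_iff' m, sum_eq_zero fun i hi => by simp [tail, mem_range.mp hi]]
    simpa [tail, Function.comp_def] using (ha.comp_injective (add_left_injective m)).hasSum
  have hbound (n : ℕ) : ∑' k, ‖cauchyProduct (q n) a k‖ ^ 2
      ≤ 2 * ((∑' i, ‖head i‖) ^ 2 * ∑' i, ‖q n i‖ ^ 2) + 2 * (C ^ 2 * ∑' i, ‖a (i + m)‖ ^ 2) := by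
    have hconv : cauchyProduct (q n) a = cauchyProduct head (q n) + cauchyProduct (q n) tail := by
      conv_lhs => rw [hsplit]
      rw [cauchyProduct_add_right, cauchyProduct_comm (q n) head]
    simp only [hconv, Pi.add_apply]
    refine (tsum_sq_norm_add_le (E := R) (summable_sq_norm_cauchyProduct hhead (hq₂ n))
      (summable_sq_norm_cauchyProduct (hq₁ n) htail.summable)).trans (add_le_add ?_ ?_)
    · exact mul_le_mul_of_nonneg_left (tsum_sq_norm_cauchyProduct_le hhead (hq₂ n)) zero_le_two
    · refine mul_le_mul_of_nonneg_left ?_ zero_le_two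
      rw [← htail.tsum_eq]
      refine (tsum_sq_norm_cauchyProduct_le (hq₁ n) htail.summable).trans ?_
      gcongr
      exact hC n
  have hhead_small : ∀ᶠ n in atTop, 2 * ((∑' i, ‖head i‖) ^ 2 * ∑' i, ‖q n i‖ ^ 2) < ε / 2 := by
    refine ((hq.const_mul _).const_mul 2).eventually (gt_mem_nhds ?_)
    simpa using hε
  have htail_small : (∑' i, ‖a (i + m)‖ ^ 2) * (4 * C ^ 2 + 1) < ε :=
    (lt_div_iff₀ (by positivity)).1 hm
  have htail₀ : 0 ≤ ∑' i, ‖a (i + m)‖ ^ 2 := tsum_nonneg fun _ => by positivity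
  filter_upwards [hhead_small] with n hn
  nlinarith [hbound n]

end CauchyProduct

def HasPowerSeriesOnUnitDisk (f : ℂ → ℂ) (a : ℕ → ℂ) : Prop :=
  ∀ z ∈ ball (0 : ℂ) 1, Summable (fun k => ‖a k * z ^ k‖) ∧ HasSum (fun k => a k * z ^ k) (f z)

theorem DifferentiableOn.exists_hasPowerSeriesOnUnitDisk {f : ℂ → ℂ}
    (hf : DifferentiableOn ℂ f (ball 0 1)) : ∃ a, HasPowerSeriesOnUnitDisk f a := by
  have hball {R : ℝ≥0} (hR : 0 < R) (hR1 : R < 1) :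
      HasFPowerSeriesOnBall f (cauchyPowerSeries f 0 R) 0 R := by
    refine (hf.mono (closedBall_subset_ball ?_)).hasFPowerSeriesOnBall hR
    exact_mod_cast hR1
  set p := cauchyPowerSeries f 0 (2⁻¹ : ℝ≥0)
  refine ⟨p.coeff, fun z hz => ?_⟩
  obtain ⟨R, hzR, hR1⟩ := exists_between (mem_ball_zero_iff.mp hz)
  lift R to ℝ≥0 using (norm_nonneg z).trans hzR.le
  have hp : HasFPowerSeriesOnBall f p 0 R :=
    (hball (R := 2⁻¹) (by norm_num) (by norm_num)).exchange_radius
      (hball (R := R) ((norm_nonneg z).trans_lt hzR) (by exact_mod_cast hR1))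
  have hzR' : z ∈ eball (0 : ℂ) R := by
    rw [mem_eball, edist_zero_right, ← ofReal_norm, ← ENNReal.ofReal_coe_nnreal]
    exact (ENNReal.ofReal_lt_ofReal_iff_of_nonneg (norm_nonneg z)).2 hzR
  have hpz (k : ℕ) : p k (fun _ => z) = p.coeff k * z ^ k := by
    rw [p.apply_eq_pow_smul_coeff, smul_eq_mul, mul_comm]
  simp_rw [← hpz]
  exact ⟨p.summable_norm_apply (eball_subset_eball hp.r_le hzR'), by
    simpa using hp.hasSum hzR'⟩

namespace HasPowerSeriesOnUnitDisk

variable {f g : ℂ → ℂ} {a b : ℕ → ℂ}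

theorem mul (hf : HasPowerSeriesOnUnitDisk f a) (hg : HasPowerSeriesOnUnitDisk g b) :
    HasPowerSeriesOnUnitDisk (fun z => f z * g z) (cauchyProduct a b) := fun z hz => by
  obtain ⟨hfa, hfs⟩ := hf z hz
  obtain ⟨hgb, hgs⟩ := hg z hz
  have hsum := summable_norm_sum_mul_antidiagonal_of_summable_norm hfa hgb
  simp_rw [cauchyProduct_mul_pow]
  refine ⟨hsum, ?_⟩
  rw [← hfs.tsum_eq, ← hgs.tsum_eq,
    tsum_mul_tsum_eq_tsum_sum_antidiagonal_of_summable_norm hfa hgb]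
  exact hsum.of_norm.hasSum

theorem hasSum_meanSq (hf : HasPowerSeriesOnUnitDisk f a) {r : ℝ} (hr₀ : 0 ≤ r) (hr₁ : r < 1) :
    HasSum (fun k => ‖a k‖ ^ 2 * r ^ (2 * k)) (meanSq f r) := by
  have hz (θ : ℝ) : (r : ℂ) * exp (θ * I) ∈ ball (0 : ℂ) 1 := by
    simpa [norm_exp_ofReal_mul_I, abs_of_nonneg hr₀] using hr₁
  have hc : Summable fun k => ‖a k * (r : ℂ) ^ k‖ := (hf r (by simpa [abs_of_nonneg hr₀])).1
  have hg (θ : ℝ) :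
      HasSum (fun k => a k * r ^ k * exp (θ * I) ^ k) (f (r * exp (θ * I))) := by
    simpa [mul_pow, mul_assoc] using (hf _ (hz θ)).2
  rw [meanSq]
  convert hasSum_sq_norm_of_hasSum hc hg using 2 with k
  rw [norm_mul, mul_pow, norm_pow, ← pow_mul, Complex.norm_real, Real.norm_of_nonneg hr₀,
    mul_comm 2 k]

theorem summable_sq_norm (hf : HasPowerSeriesOnUnitDisk f a)
    (hbdd : BddAbove (meanSq f '' Set.Ioo 0 1)) : Summable fun k => ‖a k‖ ^ 2 := by
  obtain ⟨M, hM⟩ := hbdd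
  refine summable_of_sum_range_le (c := M) (fun k => by positivity) fun N => ?_
  have hlim : Tendsto (fun r : ℝ => ∑ k ∈ range N, ‖a k‖ ^ 2 * r ^ (2 * k))
      (𝓝[<] 1) (𝓝 (∑ k ∈ range N, ‖a k‖ ^ 2)) := by
    have : Continuous fun r : ℝ => ∑ k ∈ range N, ‖a k‖ ^ 2 * r ^ (2 * k) := by fun_prop
    simpa using (this.tendsto 1).mono_left nhdsWithin_le_nhds
  refine le_of_tendsto hlim ?_
  filter_upwards [Ioo_mem_nhdsLT (show (0:ℝ) < 1 by norm_num)] with r hr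
  have hnonneg (k : ℕ) : 0 ≤ ‖a k‖ ^ 2 * r ^ (2 * k) :=
    mul_nonneg (sq_nonneg _) (pow_nonneg hr.1.le _)
  exact (sum_le_hasSum _ (fun k _ => hnonneg k) (hf.hasSum_meanSq hr.1.le hr.2)).trans
    (hM ⟨r, hr, rfl⟩)

theorem h2Norm_le (hf : HasPowerSeriesOnUnitDisk f a) (ha : Summable fun k => ‖a k‖ ^ 2) :
    h2Norm f ≤ √(∑' k, ‖a k‖ ^ 2) := by
  refine Real.sqrt_le_sqrt (csSup_le (Set.nonempty_Ioo.mpr one_pos |>.image _) ?_)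
  rintro _ ⟨r, hr, rfl⟩
  refine hasSum_le (fun k => ?_) (hf.hasSum_meanSq hr.1.le hr.2) ha.hasSum
  exact mul_le_of_le_one_right (sq_nonneg _) (pow_le_one₀ hr.1.le hr.2.le)

end HasPowerSeriesOnUnitDisk

noncomputable def pPolySubOneCoeff (n i : ℕ) : ℂ :=
  if i ∈ Ico 1 (n + 1) then -(n : ℂ)⁻¹ else 0

theorem hasPowerSeriesOnUnitDisk_pPoly_sub_one (n : ℕ) :
    HasPowerSeriesOnUnitDisk (fun z => pPoly n z - 1) (pPolySubOneCoeff n) := fun z _ => by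
  have hsupp : ∀ i ∉ Ico 1 (n + 1), pPolySubOneCoeff n i * z ^ i = 0 := fun i hi => by
    simp [pPolySubOneCoeff, hi]
  have hval : pPoly n z - 1 = ∑ i ∈ Ico 1 (n + 1), pPolySubOneCoeff n i * z ^ i := by
    simp only [pPolySubOneCoeff, ite_mul, zero_mul, sum_ite_mem, inter_self,
      sum_Ico_eq_sum_range, add_tsub_cancel_right, ← mul_sum, pPoly]
    simp_rw [add_comm 1]
    ring
  refine ⟨summable_of_ne_finset_zero (s := Ico 1 (n + 1)) fun i hi => by simp [hsupp i hi], ?_⟩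
  show HasSum _ (pPoly n z - 1)
  rw [hval]
  exact hasSum_sum_of_ne_finset_zero hsupp

theorem hasSum_norm_pPolySubOneCoeff_pow (n p : ℕ) (hp : p ≠ 0) :
    HasSum (fun i => ‖pPolySubOneCoeff n i‖ ^ p) (n * (n : ℝ)⁻¹ ^ p) := by
  have hsupp : ∀ i ∉ Ico 1 (n + 1), ‖pPolySubOneCoeff n i‖ ^ p = 0 := fun i hi => by
    simp [pPolySubOneCoeff, hi, hp]
  have hval : ∀ i ∈ Ico 1 (n + 1), ‖pPolySubOneCoeff n i‖ ^ p = (n : ℝ)⁻¹ ^ p := fun i hi => by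
    simp [pPolySubOneCoeff, hi]
  have hsum : ∑ i ∈ Ico 1 (n + 1), ‖pPolySubOneCoeff n i‖ ^ p = n * (n : ℝ)⁻¹ ^ p := by
    rw [sum_congr rfl hval, sum_const, Nat.card_Ico, add_tsub_cancel_right, nsmul_eq_mul]
  exact hsum ▸ hasSum_sum_of_ne_finset_zero hsupp

/-- For every `f ∈ H²`, `‖p_n f - f‖_{H²} → 0` as `n → ∞`,
where `p_n(z) = 1 - (z + ⋯ + zⁿ)/n`. -/
theorem pPoly_mul_tendsto (f : ℂ → ℂ) (hf : MemH2 f) :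
    Tendsto (fun n : ℕ => h2Norm (fun z => pPoly n z * f z - f z)) atTop (nhds 0) := by
  obtain ⟨a, ha⟩ := hf.1.exists_hasPowerSeriesOnUnitDisk
  have ha₂ := ha.summable_sq_norm hf.2
  have hq₁ (n : ℕ) := hasSum_norm_pPolySubOneCoeff_pow n 1 one_ne_zero
  have hq₂ (n : ℕ) := hasSum_norm_pPolySubOneCoeff_pow n 2 two_ne_zero
  simp only [pow_one] at hq₁
  have hq₂_lim : Tendsto (fun n : ℕ => (n : ℝ) * (n : ℝ)⁻¹ ^ 2) atTop (𝓝 0) :=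
    squeeze_zero (fun n => by positivity)
      (fun n => by rw [sq, ← mul_assoc]; exact mul_le_of_le_one_left (by positivity) mul_inv_le_one)
      tendsto_inv_atTop_nhds_zero_nat
  have hlim := tendsto_tsum_sq_norm_cauchyProduct (fun n => (hq₁ n).summable)
    (fun n => (hq₁ n).tsum_eq.trans_le mul_inv_le_one) (fun n => (hq₂ n).summable)
    (hq₂_lim.congr fun n => (hq₂ n).tsum_eq.symm) ha₂
  refine squeeze_zero (fun n => Real.sqrt_nonneg _) (fun n => ?_) (by simpa using hlim.sqrt)
  simpa [sub_one_mul] using ((hasPowerSeriesOnUnitDisk_pPoly_sub_one n).mul ha).h2Norm_le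
    (summable_sq_norm_cauchyProduct (hq₁ n).summable ha₂)
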